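/- (Constant-gap optimality of VMAC-WZ, determinant form.) Let L ≥ 1, let A ∈ ℂ^{L×L} be Hermitian positive semidefinite (representing the received signal covariance H K_X H^H), and let D be the L×L diagonal matrix with positive real diagonal entries σ₁²,…,σ_L² (the background noise covariance). For every C > 0 there exists α > 0 (corresponding to quantization noise levels qᵢ = ασᵢ² proportional to the background noise levels) such that: (i) log₂( det(A + (1+α)D) / det(αD) ) ≤ C, and (ii) min{ log₂( det(A + D) / det(D) ), C } − log₂( det(A + (1+α)D) / det((1+α)D) ) < L. -/

import Mathlib

/-!
Whitening by `D^{-1/2}` gives `det (A + t D) = det D · ∏ᵢ (μᵢ + t)`, where `μᵢ ≥ 0` are the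
eigenvalues of `D^{-1/2} A D^{-1/2}`. In these coordinates the backhaul requirement is
`∑ᵢ log₂ (1 + (μᵢ + 1) / α)`, continuous in `α > 0` and tending to `0` as `α → ∞`. If it is at most `C`
at `α = 1`, take `α = 1`: the gap to `log₂ ∏ᵢ (μᵢ + 1)` is `∑ᵢ log₂ (2 (μᵢ + 1) / (μᵢ + 2)) < L`.
Otherwise the intermediate value theorem gives `α > 1` with backhaul exactly `C`, and then the
gap is at most backhaul minus rate, which is `L log₂ (1 + 1 / α) < L`.
-/

open scoped ComplexOrder
open Finset Filter Topology Real Matrix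

open Polynomial in
theorem Matrix.IsHermitian.det_add_smul_one {𝕜 n : Type*} [RCLike 𝕜] [Fintype n] [DecidableEq n]
    {B : Matrix n n 𝕜} (hB : B.IsHermitian) (t : 𝕜) :
    (B + t • 1).det = ∏ i, ((hB.eigenvalues i : 𝕜) + t) := by
  have h := congrArg (eval (-t)) hB.charpoly_eq
  rw [eval_charpoly, eval_prod] at h
  have hneg : B + t • 1 = -(scalar n (-t) - B) := by
    rw [scalar_apply, neg_sub, sub_eq_add_neg, ← diagonal_neg, ← smul_one_eq_diagonal]; simp
  rw [hneg, det_neg, h, ← Finset.card_univ, ← prod_neg]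
  simp

theorem Matrix.PosSemidef.exists_det_add_smul_diagonal {𝕜 n : Type*} [RCLike 𝕜] [Fintype n]
    [DecidableEq n] {A : Matrix n n 𝕜} (hA : A.PosSemidef) {σ : n → ℝ} (hσ : ∀ i, 0 < σ i) :
    ∃ μ : n → ℝ, (∀ i, 0 ≤ μ i) ∧ ∀ t : ℝ,
      (A + t • diagonal fun i => (σ i : 𝕜)).det = ((∏ i, σ i) * ∏ i, (μ i + t) : ℝ) := by
  set S : Matrix n n 𝕜 := diagonal fun i => (√(σ i) : 𝕜)
  set T : Matrix n n 𝕜 := diagonal fun i => ((√(σ i))⁻¹ : 𝕜)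
  have hsqrt : ∀ i, (√(σ i) : 𝕜) ≠ 0 := fun i => by simpa using Real.sqrt_ne_zero'.mpr (hσ i)
  have hST : S * T = 1 := by simp [S, T, diagonal_mul_diagonal, hsqrt]
  have hTS : T * S = 1 := by simp [S, T, diagonal_mul_diagonal, hsqrt]
  have hSS : S * S = diagonal fun i => (σ i : 𝕜) := by
    simp only [S, diagonal_mul_diagonal, ← RCLike.ofReal_mul, Real.mul_self_sqrt (hσ _).le]
  have hB : (T * A * T).PosSemidef := by
    simpa [T, Pi.star_def] using hA.conjTranspose_mul_mul_same T
  refine ⟨hB.isHermitian.eigenvalues, hB.eigenvalues_nonneg, fun t => ?_⟩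
  have hfactor : A + t • diagonal (fun i => (σ i : 𝕜)) = S * (T * A * T + (t : 𝕜) • 1) * S := by
    rw [← hSS]
    simp only [Matrix.mul_add, Matrix.add_mul, ← Matrix.mul_assoc, hST, Matrix.one_mul]
    simp only [Matrix.mul_assoc, hTS, Matrix.mul_one, Matrix.mul_smul, Matrix.smul_mul]
    rw [RCLike.real_smul_eq_coe_smul (K := 𝕜)]
  rw [hfactor, det_mul, det_mul, hB.isHermitian.det_add_smul_one, det_diagonal]
  push_cast
  rw [mul_right_comm, ← prod_mul_distrib]
  simp [← RCLike.ofReal_mul, Real.mul_self_sqrt (hσ _).le]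

section WynerZiv

variable {ι : Type*} [Fintype ι] (μ : ι → ℝ)

/-- With `μ` the eigenvalues of `D^{-1/2} A D^{-1/2}`, `wzBackhaul μ α` and `wzSumRate μ α` are
`log₂ (det (A + (1 + α) D) / det (α D))` and `log₂ (det (A + (1 + α) D) / det ((1 + α) D))`. -/
noncomputable def wzBackhaul (α : ℝ) : ℝ :=
  logb 2 ((∏ i, (μ i + (1 + α))) / α ^ Fintype.card ι)

noncomputable def wzSumRate (α : ℝ) : ℝ :=
  logb 2 ((∏ i, (μ i + (1 + α))) / (1 + α) ^ Fintype.card ι)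

lemma tendsto_wzBackhaul_atTop : Tendsto (wzBackhaul μ) atTop (𝓝 0) := by
  have hratio : Tendsto (fun α => ∏ i, ((μ i + 1) / α + 1)) atTop (𝓝 (∏ _i : ι, (0 + 1))) :=
    tendsto_finsetProd _ fun i _ =>
      (tendsto_const_nhds.div_atTop tendsto_id).add tendsto_const_nhds
  have hlog := ((continuousAt_logb (b := 2) (by simp)).tendsto).comp hratio
  simp only [zero_add, prod_const_one, logb_one] at hlog
  refine hlog.congr' ?_
  filter_upwards [eventually_gt_atTop 0] with α hα
  rw [Function.comp_apply, wzBackhaul, ← card_univ, ← prod_const, ← prod_div_distrib]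
  congr 1
  exact prod_congr rfl fun i _ => by field_simp; ring

variable {μ}

lemma prod_add_pos (hμ : ∀ i, 0 ≤ μ i) {t : ℝ} (ht : 0 < t) : 0 < ∏ i, (μ i + t) :=
  prod_pos fun i _ => by linarith [hμ i]

lemma wzBackhaul_sub_wzSumRate (hμ : ∀ i, 0 ≤ μ i) {α : ℝ} (hα : 0 < α) :
    wzBackhaul μ α - wzSumRate μ α = Fintype.card ι * logb 2 ((1 + α) / α) := by
  have hP := prod_add_pos hμ (by linarith : 0 < 1 + α)
  rw [wzBackhaul, wzSumRate, logb_div hP.ne' (by positivity), logb_div hP.ne' (by positivity),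
    logb_pow, logb_pow, logb_div (by positivity) hα.ne']
  ring

lemma wzBackhaul_sub_wzSumRate_lt [Nonempty ι] (hμ : ∀ i, 0 ≤ μ i) {α : ℝ} (hα : 1 < α) :
    wzBackhaul μ α - wzSumRate μ α < Fintype.card ι := by
  have hlog : logb 2 ((1 + α) / α) < 1 := by
    rw [logb_lt_iff_lt_rpow one_lt_two (by positivity), rpow_one, div_lt_iff₀ (by linarith)]
    linarith
  rw [wzBackhaul_sub_wzSumRate hμ (by linarith)]
  have : (0 : ℝ) < Fintype.card ι := by exact_mod_cast Fintype.card_pos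
  nlinarith

lemma logb_prod_add_one_sub_wzSumRate_one_lt [Nonempty ι] (hμ : ∀ i, 0 ≤ μ i) :
    logb 2 (∏ i, (μ i + 1)) - wzSumRate μ 1 < Fintype.card ι := by
  have hlt : ∏ i, (μ i + 1) < ∏ i, (μ i + (1 + 1)) :=
    prod_lt_prod_of_nonempty (fun i _ => by linarith [hμ i]) (fun i _ => by linarith)
      univ_nonempty
  have hrate : wzSumRate μ 1 = logb 2 (∏ i, (μ i + (1 + 1))) - Fintype.card ι := by
    rw [wzSumRate, logb_div (prod_add_pos hμ (by norm_num)).ne' (by positivity), logb_pow,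
      one_add_one_eq_two, logb_self_eq_one one_lt_two, mul_one]
  rw [hrate]
  linarith [logb_lt_logb one_lt_two (prod_add_pos hμ one_pos) hlt]

lemma continuousOn_wzBackhaul (hμ : ∀ i, 0 ≤ μ i) : ContinuousOn (wzBackhaul μ) (Set.Ioi 0) := by
  intro α (hα : 0 < α)
  refine ContinuousAt.continuousWithinAt ?_
  refine ContinuousAt.logb ?_ (div_pos (prod_add_pos hμ (by linarith)) (by positivity)).ne'
  exact ContinuousAt.div (by fun_prop) (by fun_prop) (by positivity)

lemma exists_wzBackhaul_eq (hμ : ∀ i, 0 ≤ μ i) {C : ℝ} (hC : 0 < C) (h1 : C < wzBackhaul μ 1) :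
    ∃ α, 1 < α ∧ wzBackhaul μ α = C := by
  obtain ⟨M, hMC, hM1⟩ :=
    (((tendsto_wzBackhaul_atTop μ).eventually (ge_mem_nhds hC)).and (eventually_ge_atTop 1)).exists
  have hcont : ContinuousOn (wzBackhaul μ) (Set.Icc 1 M) :=
    (continuousOn_wzBackhaul hμ).mono fun x hx => one_pos.trans_le hx.1
  obtain ⟨α, hα, hαC⟩ := intermediate_value_Icc' hM1 hcont ⟨hMC, h1.le⟩
  exact ⟨α, hα.1.lt_of_ne (by rintro rfl; linarith), hαC⟩

theorem exists_wzBackhaul_le_and_gap_lt [Nonempty ι] (hμ : ∀ i, 0 ≤ μ i) {C : ℝ} (hC : 0 < C) :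
    ∃ α, 0 < α ∧ wzBackhaul μ α ≤ C ∧
      min (logb 2 (∏ i, (μ i + 1))) C - wzSumRate μ α < Fintype.card ι := by
  by_cases h1 : wzBackhaul μ 1 ≤ C
  · exact ⟨1, one_pos, h1, (sub_le_sub_right (min_le_left _ _) _).trans_lt
      (logb_prod_add_one_sub_wzSumRate_one_lt hμ)⟩
  · obtain ⟨α, hα, hαC⟩ := exists_wzBackhaul_eq hμ hC (not_le.mp h1)
    refine ⟨α, by linarith, hαC.le, ?_⟩
    calc min (logb 2 (∏ i, (μ i + 1))) C - wzSumRate μ α ≤ C - wzSumRate μ α :=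
          sub_le_sub_right (min_le_right _ _) _
      _ = wzBackhaul μ α - wzSumRate μ α := by rw [hαC]
      _ < Fintype.card ι := wzBackhaul_sub_wzSumRate_lt hμ hα

end WynerZiv

/-- Constant-gap optimality of VMAC-WZ (determinant form): for every sum backhaul capacity
`C > 0` there is `α > 0` (quantization noise `qᵢ = ασᵢ²`) such that the Wyner-Ziv backhaul
requirement `log₂(det(A+(1+α)D)/det(αD))` is at most `C` and the gap between the cut-set
bound `min{log₂(det(A+D)/det D), C}` and the achievable sum rate
`log₂(det(A+(1+α)D)/det((1+α)D))` is less than `L` bits. -/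
theorem stmt_10 {L : ℕ} (hL : 1 ≤ L) (A : Matrix (Fin L) (Fin L) ℂ) (hA : A.PosSemidef)
    (σ : Fin L → ℝ) (hσ : ∀ i, 0 < σ i) (C : ℝ) (hC : 0 < C) :
    let D : Matrix (Fin L) (Fin L) ℂ := Matrix.diagonal fun i => (σ i : ℂ)
    ∃ α : ℝ, 0 < α ∧
      Real.logb 2 ((A + (1 + α) • D).det.re / ((α • D).det.re)) ≤ C ∧
      min (Real.logb 2 ((A + D).det.re / D.det.re)) C -
          Real.logb 2 ((A + (1 + α) • D).det.re / (((1 + α) • D).det.re)) <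
        L := by
  intro D
  have : Nonempty (Fin L) := Fin.pos_iff_nonempty.mp hL
  obtain ⟨μ, hμ, hdet⟩ := hA.exists_det_add_smul_diagonal hσ
  have hP : 0 < ∏ i, σ i := prod_pos fun i _ => hσ i
  have hsignal : ∀ t : ℝ, (A + t • D).det.re = (∏ i, σ i) * ∏ i, (μ i + t) :=
    fun t => (congrArg Complex.re (hdet t)).trans (Complex.ofReal_re _)
  have hnoise : ∀ r : ℝ, (r • D).det.re = (∏ i, σ i) * r ^ L := fun r => by
    rw [Matrix.det_smul_of_tower, Fintype.card_fin, Complex.smul_re, Matrix.det_diagonal,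
      ← Complex.ofReal_prod, Complex.ofReal_re, smul_eq_mul, mul_comm]
  have hcut : (A + D).det.re / D.det.re = ∏ i, (μ i + 1) := by
    simpa [hP.ne'] using congrArg₂ (· / ·) (hsignal 1) (hnoise 1)
  obtain ⟨α, hα, hback, hgap⟩ := exists_wzBackhaul_le_and_gap_lt hμ hC
  simp only [wzBackhaul, wzSumRate, Fintype.card_fin] at hback hgap
  refine ⟨α, hα, ?_, ?_⟩
  · rwa [hsignal, hnoise, mul_div_mul_left _ _ hP.ne']
  · rwa [hsignal, hnoise, mul_div_mul_left _ _ hP.ne', hcut]
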